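/- arXiv:2303.15611 — 8 statements merged into one kernel-verified Lean document; each statement's English description precedes it below -/
import Mathlib

section
/- The matrices σx, σy, σz satisfy the defining relations of the triangle group Δ{p,q}: σx² = 1, σy² = 1, σz² = 1, (σx·σy)^p = 1, (σy·σz)^q = 1, and (σz·σx)² = 1 (where 1 denotes the 3×3 identity matrix). -/
/-! With `η = cos θ`, the matrices `sigmaX η` and `sigmaY η ζ` are the reflections in the first two
roots for a symmetric bilinear form that is positive definite on the plane of those roots, where the
two roots make the angle `π - θ`. Hence their product is a rotation by `2θ` in that plane and fixes
a complementary vector: it is conjugate to the rotation by `2θ` about the third axis, whose `p`-th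
power is the identity when `θ = π / p`. The same holds for `sigmaY η ζ * sigmaZ ζ` with
`ζ = cos (π / q)`; the remaining relations are direct computations. -/

open Real

noncomputable def sigmaX (η : ℝ) : Matrix (Fin 3) (Fin 3) ℝ :=
  !![-1, 2*η, 0; 0, 1, 0; 0, 0, 1]

noncomputable def sigmaY (η ζ : ℝ) : Matrix (Fin 3) (Fin 3) ℝ :=
  !![1, 0, 0; 2*η, -1, 2*ζ; 0, 0, 1]

noncomputable def sigmaZ (ζ : ℝ) : Matrix (Fin 3) (Fin 3) ℝ :=
  !![1, 0, 0; 0, 1, 0; 0, 2*ζ, -1]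

theorem sigmaX_sq (η : ℝ) : sigmaX η ^ 2 = 1 := by
  rw [sq, sigmaX, Matrix.mul_fin_three, Matrix.one_fin_three]
  norm_num

theorem sigmaY_sq (η ζ : ℝ) : sigmaY η ζ ^ 2 = 1 := by
  rw [sq, sigmaY, Matrix.mul_fin_three, Matrix.one_fin_three]
  norm_num

theorem sigmaZ_sq (ζ : ℝ) : sigmaZ ζ ^ 2 = 1 := by
  rw [sq, sigmaZ, Matrix.mul_fin_three, Matrix.one_fin_three]
  norm_num

theorem sigmaZ_mul_sigmaX_sq (η ζ : ℝ) : (sigmaZ ζ * sigmaX η) ^ 2 = 1 := by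
  simp only [sq, sigmaZ, sigmaX, Matrix.mul_fin_three, Matrix.one_fin_three]
  norm_num

noncomputable def planeRotation (φ : ℝ) : Matrix (Fin 3) (Fin 3) ℝ :=
  !![cos φ, -sin φ, 0; sin φ, cos φ, 0; 0, 0, 1]

theorem planeRotation_add (φ ψ : ℝ) :
    planeRotation (φ + ψ) = planeRotation φ * planeRotation ψ := by
  simp only [planeRotation, Matrix.mul_fin_three, cos_add, sin_add]
  congr 1
  ring_nf

theorem planeRotation_pow (φ : ℝ) (n : ℕ) : planeRotation φ ^ n = planeRotation (n * φ) := by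
  induction n with
  | zero => simp [planeRotation, Matrix.one_fin_three]
  | succ n ih =>
    rw [pow_succ, ih, ← planeRotation_add]
    push_cast
    ring_nf

theorem planeRotation_two_mul_eq_one {x : ℝ} (hx : sin x = 0) : planeRotation (2 * x) = 1 := by
  rw [planeRotation, Matrix.one_fin_three, cos_two_mul, sin_two_mul, cos_sq', hx]
  norm_num

theorem pow_eq_one_of_mul_eq_mul_planeRotation {M P : Matrix (Fin 3) (Fin 3) ℝ} {θ : ℝ} {n : ℕ}
    (hP : P.det ≠ 0) (hMP : M * P = P * planeRotation (2 * θ)) (hn : sin (n * θ) = 0) :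
    M ^ n = 1 := by
  have hPu : IsUnit P := (Matrix.isUnit_iff_isUnit_det P).mpr hP.isUnit
  have hconj : IsConj (planeRotation (2 * θ)) M := ⟨hPu.unit, hMP.symm⟩
  have hrot : planeRotation (2 * θ) ^ n = 1 := by
    rw [planeRotation_pow, mul_left_comm, planeRotation_two_mul_eq_one hn]
  rw [← isConj_one_right, ← hrot]
  exact hconj.pow n

/- The first two columns of the conjugating matrix are `sin θ • e₁` and `e₂ + cos θ • e₁`, an
orthonormal basis of the rotation plane up to the factor `sin θ`; the last one is fixed. -/
theorem sigmaX_mul_sigmaY_pow_eq_one {θ : ℝ} (ζ : ℝ) {n : ℕ} (hθ : sin θ ≠ 0)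
    (hn : sin (n * θ) = 0) : (sigmaX (cos θ) * sigmaY (cos θ) ζ) ^ n = 1 := by
  refine pow_eq_one_of_mul_eq_mul_planeRotation
    (P := !![sin θ, cos θ, cos θ * ζ; 0, 1, ζ; 0, 0, sin θ ^ 2]) ?_ ?_ hn
  · simp [Matrix.det_fin_three, hθ]
  · simp only [sigmaX, sigmaY, planeRotation, Matrix.mul_fin_three, cos_two_mul, sin_two_mul]
    congr 1
    simp only [Matrix.vecCons_inj, and_true]
    grind [sin_sq_add_cos_sq θ]

theorem sigmaY_mul_sigmaZ_pow_eq_one (η : ℝ) {θ : ℝ} {n : ℕ} (hθ : sin θ ≠ 0)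
    (hn : sin (n * θ) = 0) : (sigmaY η (cos θ) * sigmaZ (cos θ)) ^ n = 1 := by
  refine pow_eq_one_of_mul_eq_mul_planeRotation
    (P := !![0, 0, sin θ ^ 2; sin θ, cos θ, η; 0, 1, η * cos θ]) ?_ ?_ hn
  · simp [Matrix.det_fin_three, hθ]
  · simp only [sigmaY, sigmaZ, planeRotation, Matrix.mul_fin_three, cos_two_mul, sin_two_mul]
    congr 1
    simp only [Matrix.vecCons_inj, and_true]
    grind [sin_sq_add_cos_sq θ]

theorem sin_pi_div_natCast_ne_zero {p : ℕ} (hp : 1 < p) : sin (π / p) ≠ 0 :=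
  (sin_pos_of_pos_of_lt_pi (by positivity) (div_lt_self pi_pos (Nat.one_lt_cast.mpr hp))).ne'

theorem sin_mul_pi_div_self (x : ℝ) : sin (x * (π / x)) = 0 := by
  rcases eq_or_ne x 0 with hx | hx
  · simp [hx]
  · rw [mul_div_cancel₀ π hx, sin_pi]

theorem triangle_group_relations (p q : ℕ) (hp : 2 ≤ p) (hq : 2 ≤ q)
    (η ζ : ℝ) (hη : η = Real.cos (π / p)) (hζ : ζ = Real.cos (π / q)) :
    sigmaX η ^ 2 = 1 ∧ sigmaY η ζ ^ 2 = 1 ∧ sigmaZ ζ ^ 2 = 1 ∧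
    (sigmaX η * sigmaY η ζ) ^ p = 1 ∧
    (sigmaY η ζ * sigmaZ ζ) ^ q = 1 ∧
    (sigmaZ ζ * sigmaX η) ^ 2 = 1 := by
  refine ⟨sigmaX_sq η, sigmaY_sq η ζ, sigmaZ_sq ζ, ?_, ?_, sigmaZ_mul_sigmaX_sq η ζ⟩
  · rw [hη]
    exact sigmaX_mul_sigmaY_pow_eq_one ζ (sin_pi_div_natCast_ne_zero hp) (sin_mul_pi_div_self p)
  · rw [hζ]
    exact sigmaY_mul_sigmaZ_pow_eq_one η (sin_pi_div_natCast_ne_zero hq) (sin_mul_pi_div_self q)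
end

section
/- In the group of invertible 3×3 real matrices, the element σx·σy has order exactly p, the element σy·σz has order exactly q, and the element σz·σx has order exactly 2. -/
open Real

/-!
With `θ = π / p`, the product `σx σy` fixes a vector and acts on a complementary plane as the
rotation by `2θ`, so it is conjugate to multiplication by the primitive `p`-th root of unity
`exp (2πi / p)` on `ℂ ≅ ℝ²`, extended by the identity; hence its order is `p`. Reversing the
order of the basis exchanges `σx` and `σz` and swaps `η` and `ζ` in `σy`, so `σy σz` is conjugate
to `σy σx`, whose order is that of `σx σy`. Finally `σz σx` is an involution different from `1`.
-/

theorem orderOf_eq_of_semiconjBy {M : Type*} [Monoid M] {u x y : M} (hu : IsUnit u)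
    (h : SemiconjBy u x y) : orderOf x = orderOf y := by
  obtain ⟨u, rfl⟩ := hu
  refine orderOf_eq_orderOf_iff.mpr fun n => ?_
  calc x ^ n = 1 ↔ u * x ^ n = u * 1 := (Units.mul_right_inj u).symm
    _ ↔ y ^ n * u = 1 * u := by rw [(h.pow_right n).eq, mul_one, one_mul]
    _ ↔ y ^ n = 1 := Units.mul_left_inj u

def rotationMatrix : ℂ →* Matrix (Fin 3) (Fin 3) ℝ where
  toFun z := !![z.re, -z.im, 0; z.im, z.re, 0; 0, 0, 1]
  map_one' := by simp [Matrix.one_fin_three]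
  map_mul' z w := by
    ext i j; fin_cases i <;> fin_cases j <;> simp [Matrix.mul_apply, Fin.sum_univ_three] <;> ring

theorem rotationMatrix_injective : Function.Injective rotationMatrix := fun _ _ h =>
  Complex.ext (congr_fun₂ h 0 0) (congr_fun₂ h 1 0)

theorem rotationMatrix_exp_mul_I (θ : ℝ) :
    rotationMatrix (Complex.exp (θ * Complex.I)) =
      !![cos θ, -sin θ, 0; sin θ, cos θ, 0; 0, 0, 1] := by
  simp [rotationMatrix, Complex.exp_ofReal_mul_I_re, Complex.exp_ofReal_mul_I_im]

theorem orderOf_rotation_two_pi_div {n : ℕ} (hn : n ≠ 0) :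
    orderOf !![cos (2 * π / n), -sin (2 * π / n), 0; sin (2 * π / n), cos (2 * π / n), 0; 0, 0, 1]
      = n := by
  have h : ((2 * π / n : ℝ) : ℂ) * Complex.I = 2 * π * Complex.I / n := by push_cast; ring
  rw [← rotationMatrix_exp_mul_I, orderOf_injective _ rotationMatrix_injective, h,
    ← (Complex.isPrimitiveRoot_exp n hn).eq_orderOf]

/-- The first two columns span the plane on which `sigmaX (cos θ) * sigmaY (cos θ) z` rotates by
`2θ`, the third is its fixed vector. -/
noncomputable def rotationConjugator (θ z : ℝ) : Matrix (Fin 3) (Fin 3) ℝ :=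
  !![cos θ, -sin θ, cos θ * z; 1, 0, z; 0, 0, sin θ ^ 2]

theorem det_rotationConjugator (θ z : ℝ) : (rotationConjugator θ z).det = sin θ ^ 3 := by
  simp [rotationConjugator, Matrix.det_fin_three]; ring

theorem semiconjBy_rotationConjugator (θ z : ℝ) :
    SemiconjBy (rotationConjugator θ z)
      !![cos (2 * θ), -sin (2 * θ), 0; sin (2 * θ), cos (2 * θ), 0; 0, 0, 1]
      (sigmaX (cos θ) * sigmaY (cos θ) z) := by
  have hpythagoras := sin_sq_add_cos_sq θ
  simp only [SemiconjBy, rotationConjugator, sigmaX, sigmaY, Matrix.mul_fin_three, cos_two_mul,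
    sin_two_mul]
  ext i j; fin_cases i <;> fin_cases j <;> simp <;> grind

theorem orderOf_sigmaX_mul_sigmaY {p : ℕ} (hp : 2 ≤ p) (z : ℝ) :
    orderOf (sigmaX (cos (π / p)) * sigmaY (cos (π / p)) z) = p := by
  have hsin : sin (π / p) ≠ 0 :=
    (sin_pos_of_pos_of_lt_pi (by positivity) (div_lt_self pi_pos (by exact_mod_cast hp))).ne'
  have hU : IsUnit (rotationConjugator (π / p) z) := by
    rw [Matrix.isUnit_iff_isUnit_det, det_rotationConjugator]
    exact (pow_ne_zero 3 hsin).isUnit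
  rw [← orderOf_eq_of_semiconjBy hU (semiconjBy_rotationConjugator _ z), ← mul_div_assoc,
    orderOf_rotation_two_pi_div (by omega)]

theorem reindex_revPerm_sigmaY (η ζ : ℝ) :
    Matrix.reindexAlgEquiv ℝ ℝ Fin.revPerm (sigmaY η ζ) = sigmaY ζ η := by
  ext i j; fin_cases i <;> fin_cases j <;> simp [sigmaY]

theorem reindex_revPerm_sigmaZ (ζ : ℝ) :
    Matrix.reindexAlgEquiv ℝ ℝ Fin.revPerm (sigmaZ ζ) = sigmaX ζ := by
  ext i j; fin_cases i <;> fin_cases j <;> simp [sigmaZ, sigmaX]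

theorem sigmaX_mul_self (η : ℝ) : sigmaX η * sigmaX η = 1 := by
  simp [sigmaX, Matrix.one_fin_three]

theorem orderOf_sigmaY_mul_sigmaZ {q : ℕ} (hq : 2 ≤ q) (η : ℝ) :
    orderOf (sigmaY η (cos (π / q)) * sigmaZ (cos (π / q))) = q := by
  set ζ := cos (π / q)
  calc orderOf (sigmaY η ζ * sigmaZ ζ)
      = orderOf (sigmaY ζ η * sigmaX ζ) := by
        rw [← reindex_revPerm_sigmaY η ζ, ← reindex_revPerm_sigmaZ ζ, ← map_mul]
        exact ((Matrix.reindexAlgEquiv ℝ ℝ Fin.revPerm).toMulEquiv.orderOf_eq _).symm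
    _ = orderOf (sigmaX ζ * sigmaY ζ η) :=
        orderOf_eq_of_semiconjBy (IsUnit.of_mul_eq_one _ (sigmaX_mul_self ζ))
          (mul_assoc _ _ _).symm
    _ = q := orderOf_sigmaX_mul_sigmaY hq η

theorem orderOf_sigmaZ_mul_sigmaX (η ζ : ℝ) : orderOf (sigmaZ ζ * sigmaX η) = 2 := by
  refine orderOf_eq_prime ?_ fun h => ?_
  · simp [sq, sigmaZ, sigmaX, Matrix.one_fin_three]
  · have h00 := congr_fun₂ h 0 0
    norm_num [sigmaZ, sigmaX, Matrix.mul_fin_three] at h00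

theorem triangle_group_generator_orders (p q : ℕ) (hp : 2 ≤ p) (hq : 2 ≤ q)
    (η ζ : ℝ) (hη : η = Real.cos (π / p)) (hζ : ζ = Real.cos (π / q))
    (gx gy gz : GL (Fin 3) ℝ)
    (hgx : (gx : Matrix (Fin 3) (Fin 3) ℝ) = sigmaX η)
    (hgy : (gy : Matrix (Fin 3) (Fin 3) ℝ) = sigmaY η ζ)
    (hgz : (gz : Matrix (Fin 3) (Fin 3) ℝ) = sigmaZ ζ) :
    orderOf (gx * gy) = p ∧ orderOf (gy * gz) = q ∧ orderOf (gz * gx) = 2 := by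
  subst hη hζ
  simp only [← orderOf_units, Units.val_mul, hgx, hgy, hgz]
  exact ⟨orderOf_sigmaX_mul_sigmaY hp _, orderOf_sigmaY_mul_sigmaZ hq _,
    orderOf_sigmaZ_mul_sigmaX _ _⟩
end

section
/- The group homomorphism from the presented group ⟨x, y, z | x², y², z², (xy)^p, (yz)^q, (zx)²⟩ to GL(3, ℝ) determined by sending x ↦ σx, y ↦ σy, z ↦ σz is injective; that is, the geometric representation of the triangle group Δ{p,q} is faithful. -/
/-!
The triangle group is the Coxeter group `W` with Coxeter matrix `(1 p 2; p 1 q; 2 q 1)`, and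
`σx, σy, σz` are the matrices of its Tits geometric representation in the basis of simple roots
`α₀, α₁, α₂`. Faithfulness follows from Tits' positivity: if `ℓ(w sᵢ) > ℓ(w)`, then `w αᵢ` has
nonnegative coordinates. This is proved by induction on `ℓ(w)`. For a right descent `j ≠ i` of `w`,
peel off the longest alternating suffix in `sᵢ, sⱼ`: `w = u v` with `ℓ(w) = ℓ(u) + ℓ(v)`, `u` has
no right descent in `{i, j}`, and `v` is an alternating word of length `k` ending in `sⱼ`; here
`k < mᵢⱼ`, since longer alternating words are not reduced and for `k = mᵢⱼ` the braid relation
would make `i` a right descent of `w`.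
In the dihedral group `⟨sᵢ, sⱼ⟩`, with `θ = π / mᵢⱼ`, the vector `sin θ · v αᵢ` is
`sin ((k + 1) θ)` times one of `αᵢ, αⱼ` plus `sin (k θ)` times the other, which has nonnegative
coefficients, and the induction hypothesis applies to `u αᵢ` and `u αⱼ`. Finally, if `w ≠ 1` acts
trivially, pick a right descent `j`: then `w sⱼ αⱼ ≥ 0`, but `w sⱼ αⱼ = sⱼ αⱼ = -αⱼ`.
-/

open Real

/-- The relator set of the triangle group
`Δ{p,q} = ⟨x,y,z | x², y², z², (xy)^p, (yz)^q, (zx)²⟩`,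
with generators indexed by `Fin 3` (`0 ↦ x`, `1 ↦ y`, `2 ↦ z`). -/
def triangleRels (p q : ℕ) : Set (FreeGroup (Fin 3)) :=
  {FreeGroup.of 0 ^ 2, FreeGroup.of 1 ^ 2, FreeGroup.of 2 ^ 2,
   (FreeGroup.of 0 * FreeGroup.of 1) ^ p,
   (FreeGroup.of 1 * FreeGroup.of 2) ^ q,
   (FreeGroup.of 2 * FreeGroup.of 0) ^ 2}

namespace CoxeterSystem

open Matrix

variable {B W : Type*} [Group W] {M : CoxeterMatrix B} (cs : CoxeterSystem M W)

local prefix:100 "s" => cs.simple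
local prefix:100 "ℓ" => cs.length

theorem exists_eq_mul_alternatingWord_of_isRightDescent (i : B) {j : B} {w : W}
    (hw : cs.IsRightDescent w j) :
    ∃ u k, 0 < k ∧ w = u * cs.wordProd (alternatingWord i j k) ∧ ℓ w = ℓ u + k ∧
      ¬cs.IsRightDescent u i ∧ ¬cs.IsRightDescent u j := by
  induction hn : ℓ w using Nat.strong_induction_on generalizing w i j with
  | _ n ih =>
  have hwj := cs.isRightDescent_iff.mp hw
  by_cases hi : cs.IsRightDescent (w * s j) i
  · obtain ⟨u, k, -, hu, hlen, huj, hui⟩ := ih _ (by omega) j hi rfl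
    refine ⟨u, k + 1, k.succ_pos, ?_, by omega, hui, huj⟩
    rw [alternatingWord_succ, wordProd_concat, ← mul_assoc, ← hu,
      simple_mul_simple_cancel_right]
  · refine ⟨w * s j, 1, one_pos, ?_, by omega, hi, ?_⟩
    · simp [alternatingWord, simple_mul_simple_cancel_right]
    · rwa [← isRightDescent_iff_not_isRightDescent_mul]

theorem lt_of_eq_mul_alternatingWord {i j : B} (hM : M i j ≠ 0) {u w : W} {k : ℕ}
    (hw : w = u * cs.wordProd (alternatingWord i j k)) (hlen : ℓ w = ℓ u + k)
    (hi : ¬cs.IsRightDescent w i) : k < M i j := by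
  have hred : cs.IsReduced (alternatingWord i j k) := by
    have := cs.length_wordProd_le (alternatingWord i j k)
    have := hw ▸ cs.length_mul_le u (cs.wordProd (alternatingWord i j k))
    unfold IsReduced
    simp only [length_alternatingWord] at *
    omega
  have hle : k ≤ M i j := not_lt.mp fun h => cs.not_isReduced_alternatingWord i j hM h hred
  refine lt_of_le_of_ne hle fun hk => hi ?_
  -- by the braid relation, `w` also ends with `i`
  obtain ⟨k', rfl⟩ : ∃ k', k = k' + 1 := ⟨k - 1, by omega⟩
  have hbraid := cs.prod_alternatingWord_eq_prod_alternatingWord_sub i j (k' + 1) (by omega)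
  rw [show M i j * 2 - (k' + 1) = k' + 1 by omega] at hbraid
  have hwi : w * s i = u * cs.wordProd (alternatingWord i j k') := by
    rw [hw, hbraid, alternatingWord_succ, wordProd_concat, ← mul_assoc,
      simple_mul_simple_cancel_right]
  have := cs.length_wordProd_le (alternatingWord i j k')
  have := hwi ▸ cs.length_mul_le u (cs.wordProd (alternatingWord i j k'))
  simp only [length_alternatingWord] at *
  unfold IsRightDescent
  omega

variable [DecidableEq B] [Fintype B]

/-- `ψ (s j)` is the reflection `αᵢ ↦ αᵢ - 2 B(αᵢ, αⱼ) αⱼ` for the Tits form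
`B(αᵢ, αⱼ) = -cos (π / M i j)` on the standard basis `αᵢ = Pi.single i 1`; since `M i i = 1`,
the case `i = j` says `ψ (s i) αᵢ = -αᵢ`. -/
def IsGeometricRepresentation (ψ : W →* Matrix B B ℝ) : Prop :=
  ∀ i j, ψ (s j) *ᵥ Pi.single i 1 = Pi.single i 1 + (2 * cos (π / M i j)) • Pi.single j 1

variable {cs} {ψ : W →* Matrix B B ℝ}

namespace IsGeometricRepresentation

theorem mulVec_single_self (hψ : cs.IsGeometricRepresentation ψ) (i : B) :
    ψ (s i) *ᵥ Pi.single i 1 = -Pi.single i 1 := by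
  rw [hψ i i, M.diagonal, Nat.cast_one, div_one, cos_pi]
  module

theorem sin_smul_mulVec_alternatingWord (hψ : cs.IsGeometricRepresentation ψ) (i j : B) (k : ℕ) :
    sin (π / M i j) • (ψ (cs.wordProd (alternatingWord i j k)) *ᵥ Pi.single i 1) =
      if Even k then
        sin ((k + 1) * (π / M i j)) • Pi.single i 1 + sin (k * (π / M i j)) • Pi.single j 1
      else
        sin (k * (π / M i j)) • Pi.single i 1 + sin ((k + 1) * (π / M i j)) • Pi.single j 1 := by
  set θ := π / M i j
  have hji : ψ (s j) *ᵥ Pi.single i 1 = Pi.single i 1 + (2 * cos θ) • Pi.single j 1 := hψ i j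
  have hij : ψ (s i) *ᵥ Pi.single j 1 = Pi.single j 1 + (2 * cos θ) • Pi.single i 1 := by
    rw [hψ j i, M.symmetric]
  have hsin (x : ℝ) : sin ((x + 1 + 1) * θ) = 2 * cos θ * sin ((x + 1) * θ) - sin (x * θ) := by
    rw [show (x + 1 + 1) * θ = (x + 1) * θ + θ by ring, show x * θ = (x + 1) * θ - θ by ring,
      sin_add, sin_sub]
    ring
  induction k with
  | zero => rw [alternatingWord, wordProd_nil, map_one, one_mulVec]; simp
  | succ k ih =>
    rw [alternatingWord_succ', wordProd_cons, map_mul, ← mulVec_mulVec, ← mulVec_smul, ih]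
    push_cast
    rcases Nat.even_or_odd k with hk | hk
    · rw [if_pos hk, if_pos hk, if_neg (Nat.not_even_iff_odd.2 hk.add_one), mulVec_add,
        mulVec_smul, mulVec_smul, hji, hψ.mulVec_single_self j, hsin]
      module
    · rw [if_neg (Nat.not_even_iff_odd.2 hk), if_neg (Nat.not_even_iff_odd.2 hk),
        if_pos hk.add_one, mulVec_add, mulVec_smul, mulVec_smul, hij, hψ.mulVec_single_self i,
        hsin]
      module

theorem exists_mulVec_alternatingWord_eq (hψ : cs.IsGeometricRepresentation ψ) {i j : B}
    (hij : i ≠ j) {k : ℕ} (hk : k < M i j) :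
    ∃ a b : ℝ, 0 ≤ a ∧ 0 ≤ b ∧ ψ (cs.wordProd (alternatingWord i j k)) *ᵥ Pi.single i 1 =
      a • Pi.single i 1 + b • Pi.single j 1 := by
  have hm : (2 : ℝ) ≤ M i j := by
    have := M.off_diagonal i j hij
    exact_mod_cast (show 2 ≤ M i j by omega)
  have hsin (r : ℕ) (hr : r ≤ M i j) : 0 ≤ sin (r * (π / M i j)) := by
    refine sin_nonneg_of_nonneg_of_le_pi (by positivity) ?_
    calc (r : ℝ) * (π / M i j) ≤ M i j * (π / M i j) := by gcongr
      _ = π := mul_div_cancel₀ π (by positivity)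
  have hθ : 0 < sin (π / M i j) :=
    sin_pos_of_pos_of_lt_pi (by positivity) (div_lt_self pi_pos (by linarith))
  have h₀ := hsin k hk.le
  have h₁ := hsin (k + 1) hk
  push_cast at h₁
  rw [← inv_smul_smul₀ hθ.ne' (ψ _ *ᵥ _), hψ.sin_smul_mulVec_alternatingWord, smul_ite,
    smul_add, smul_add, smul_smul, smul_smul, smul_smul, smul_smul]
  split_ifs
  · exact ⟨_, _, mul_nonneg (inv_nonneg.2 hθ.le) h₁, mul_nonneg (inv_nonneg.2 hθ.le) h₀, rfl⟩
  · exact ⟨_, _, mul_nonneg (inv_nonneg.2 hθ.le) h₀, mul_nonneg (inv_nonneg.2 hθ.le) h₁, rfl⟩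

theorem nonneg_mulVec_single_of_not_isRightDescent (hψ : cs.IsGeometricRepresentation ψ)
    (hM : ∀ i j, M i j ≠ 0) {w : W} {i : B} (hi : ¬cs.IsRightDescent w i) :
    0 ≤ ψ w *ᵥ Pi.single i 1 := by
  induction hn : cs.length w using Nat.strong_induction_on generalizing w i with
  | _ n ih =>
  obtain rfl | hw := eq_or_ne w 1
  · rw [map_one, one_mulVec]
    exact Pi.single_nonneg.2 zero_le_one
  obtain ⟨j, hj⟩ := cs.exists_rightDescent_of_ne_one hw
  have hij : i ≠ j := by rintro rfl; exact hi hj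
  obtain ⟨u, k, hk, rfl, hlen, hui, huj⟩ :=
    cs.exists_eq_mul_alternatingWord_of_isRightDescent i hj
  obtain ⟨a, b, ha, hb, hv⟩ :=
    hψ.exists_mulVec_alternatingWord_eq hij (cs.lt_of_eq_mul_alternatingWord (hM i j) rfl hlen hi)
  rw [map_mul, ← mulVec_mulVec, hv, mulVec_add, mulVec_smul, mulVec_smul]
  exact add_nonneg (smul_nonneg ha (ih _ (by omega) hui rfl))
    (smul_nonneg hb (ih _ (by omega) huj rfl))

theorem injective (hψ : cs.IsGeometricRepresentation ψ) (hM : ∀ i j, M i j ≠ 0) :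
    Function.Injective ψ := by
  refine (injective_iff_map_eq_one ψ).mpr fun w hw => by_contra fun hw1 => ?_
  obtain ⟨j, hj⟩ := cs.exists_rightDescent_of_ne_one hw1
  have := hψ.nonneg_mulVec_single_of_not_isRightDescent hM
    (cs.isRightDescent_iff_not_isRightDescent_mul.mp hj) j
  rw [map_mul, hw, one_mul, hψ.mulVec_single_self] at this
  norm_num at this

end IsGeometricRepresentation

end CoxeterSystem

theorem Subgroup.Normal.mul_pow_mem_comm {G : Type*} [Group G] {N : Subgroup G} (hN : N.Normal)
    {a b : G} {n : ℕ} (h : (a * b) ^ n ∈ N) : (b * a) ^ n ∈ N := by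
  simpa [mul_assoc, mul_pow_mul] using hN.conj_mem _ h a⁻¹

def triangleCoxeterMatrix (p q : ℕ) (hp : 2 ≤ p) (hq : 2 ≤ q) : CoxeterMatrix (Fin 3) where
  M := !![1, p, 2; p, 1, q; 2, q, 1]
  isSymm := by ext i j; fin_cases i <;> fin_cases j <;> rfl
  diagonal i := by fin_cases i <;> rfl
  off_diagonal i j hij := by fin_cases i <;> fin_cases j <;> simp_all <;> omega

theorem normalClosure_triangleRels (p q : ℕ) (hp : 2 ≤ p) (hq : 2 ≤ q) :
    Subgroup.normalClosure (triangleRels p q) =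
      Subgroup.normalClosure (triangleCoxeterMatrix p q hp hq).relationsSet := by
  apply le_antisymm
  · refine Subgroup.normalClosure_mono ?_
    rintro r (rfl | rfl | rfl | rfl | rfl | rfl)
    · exact ⟨(0, 0), by simp [CoxeterMatrix.relation, triangleCoxeterMatrix, pow_two]⟩
    · exact ⟨(1, 1), by simp [CoxeterMatrix.relation, triangleCoxeterMatrix, pow_two]⟩
    · exact ⟨(2, 2), by simp [CoxeterMatrix.relation, triangleCoxeterMatrix, pow_two]⟩
    · exact ⟨(0, 1), rfl⟩
    · exact ⟨(1, 2), rfl⟩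
    · exact ⟨(2, 0), rfl⟩
  · refine Subgroup.normalClosure_le_normal ?_
    rintro _ ⟨⟨i, j⟩, rfl⟩
    fin_cases i <;> fin_cases j <;>
      first
        | (apply Subgroup.subset_normalClosure
           simp [CoxeterMatrix.relation, triangleCoxeterMatrix, triangleRels, pow_two]
           done)
        | (apply Subgroup.normalClosure_normal.mul_pow_mem_comm
           apply Subgroup.subset_normalClosure
           simp [triangleCoxeterMatrix, triangleRels])

theorem triangleCoxeterMatrix_ne_zero (p q : ℕ) (hp : 2 ≤ p) (hq : 2 ≤ q) (i j : Fin 3) :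
    triangleCoxeterMatrix p q hp hq i j ≠ 0 := by
  fin_cases i <;> fin_cases j <;> simp [triangleCoxeterMatrix] <;> omega

def triangleCoxeterSystem (p q : ℕ) (hp : 2 ≤ p) (hq : 2 ≤ q) :
    CoxeterSystem (triangleCoxeterMatrix p q hp hq) (PresentedGroup (triangleRels p q)) :=
  ⟨QuotientGroup.quotientMulEquivOfEq (normalClosure_triangleRels p q hp hq)⟩

theorem triangleCoxeterSystem_simple (p q : ℕ) (hp : 2 ≤ p) (hq : 2 ≤ q) (i : Fin 3) :
    (triangleCoxeterSystem p q hp hq).simple i = PresentedGroup.of i :=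
  rfl

theorem triangle_isGeometricRepresentation {p q : ℕ} {hp : 2 ≤ p} {hq : 2 ≤ q} {W : Type*}
    [Group W] {cs : CoxeterSystem (triangleCoxeterMatrix p q hp hq) W}
    {ψ : W →* Matrix (Fin 3) (Fin 3) ℝ}
    (hx : ψ (cs.simple 0) = sigmaX (cos (π / p)))
    (hy : ψ (cs.simple 1) = sigmaY (cos (π / p)) (cos (π / q)))
    (hz : ψ (cs.simple 2) = sigmaZ (cos (π / q))) :
    cs.IsGeometricRepresentation ψ := by
  have hψ (j : Fin 3) : ψ (cs.simple j) =
      ![sigmaX (cos (π / p)), sigmaY (cos (π / p)) (cos (π / q)), sigmaZ (cos (π / q))] j := by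
    fin_cases j
    exacts [hx, hy, hz]
  intro i j
  rw [hψ]
  fin_cases i <;> fin_cases j <;> ext k <;> fin_cases k <;>
    norm_num [sigmaX, sigmaY, sigmaZ, triangleCoxeterMatrix]

theorem triangle_group_geometric_representation_faithful
    (p q : ℕ) (hp : 2 ≤ p) (hq : 2 ≤ q)
    (η ζ : ℝ) (hη : η = Real.cos (π / p)) (hζ : ζ = Real.cos (π / q))
    (gx gy gz : GL (Fin 3) ℝ)
    (hgx : (gx : Matrix (Fin 3) (Fin 3) ℝ) = sigmaX η)
    (hgy : (gy : Matrix (Fin 3) (Fin 3) ℝ) = sigmaY η ζ)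
    (hgz : (gz : Matrix (Fin 3) (Fin 3) ℝ) = sigmaZ ζ)
    (φ : PresentedGroup (triangleRels p q) →* GL (Fin 3) ℝ)
    (hφx : φ (PresentedGroup.of 0) = gx)
    (hφy : φ (PresentedGroup.of 1) = gy)
    (hφz : φ (PresentedGroup.of 2) = gz) :
    Function.Injective φ := by
  subst hη hζ
  have hψ : (triangleCoxeterSystem p q hp hq).IsGeometricRepresentation
      ((Units.coeHom (Matrix (Fin 3) (Fin 3) ℝ)).comp φ) :=
    triangle_isGeometricRepresentation (by simp [triangleCoxeterSystem_simple, hφx, hgx])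
      (by simp [triangleCoxeterSystem_simple, hφy, hgy])
      (by simp [triangleCoxeterSystem_simple, hφz, hgz])
  exact Function.Injective.of_comp (f := Units.val)
    (hψ.injective (triangleCoxeterMatrix_ne_zero p q hp hq))
end

section
/- If p, q ≥ 3 are natural numbers satisfying the hyperbolicity condition 1/p + 1/q < 1/2, then cos²(π/p) + cos²(π/q) > 1. Consequently, with Υ = √(cos²(π/p) + cos²(π/q)) one has Υ > 1, so the bilinear form B has one negative eigenvalue 1 − Υ and two positive eigenvalues 1 and 1 + Υ, i.e. it is a Minkowski (Lorentzian) form. -/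
open Real

theorem hyperbolicity_minkowski_signature (p q : ℕ) (hp : 3 ≤ p) (hq : 3 ≤ q)
    (hyp : (1 : ℝ) / p + 1 / q < 1 / 2) :
    Real.cos (π / p) ^ 2 + Real.cos (π / q) ^ 2 > 1 ∧
    Real.sqrt (Real.cos (π / p) ^ 2 + Real.cos (π / q) ^ 2) > 1 ∧
    1 - Real.sqrt (Real.cos (π / p) ^ 2 + Real.cos (π / q) ^ 2) < 0 ∧
    0 < 1 + Real.sqrt (Real.cos (π / p) ^ 2 + Real.cos (π / q) ^ 2) ∧
    (0 : ℝ) < 1 := by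
  have hp' : (3 : ℝ) ≤ p := by exact_mod_cast hp
  have hq' : (3 : ℝ) ≤ q := by exact_mod_cast hq
  have hp0 : (0 : ℝ) < p := by linarith
  have hq0 : (0 : ℝ) < q := by linarith
  have hπ : (0 : ℝ) < π := Real.pi_pos
  have ha0 : 0 < π / p := div_pos hπ hp0
  have hb0 : 0 < π / q := div_pos hπ hq0
  have hsum : π / p + π / q < π / 2 := by
    have := mul_lt_mul_of_pos_left hyp hπ
    rw [mul_add] at this
    calc π / p + π / q = π * (1 / p) + π * (1 / q) := by ring
      _ < π * (1 / 2) := this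
      _ = π / 2 := by ring
  -- cos (π/p) > cos (π/2 - π/q) = sin (π/q)
  have hkey : Real.sin (π / q) < Real.cos (π / p) := by
    rw [← Real.cos_pi_div_two_sub]
    apply Real.cos_lt_cos_of_nonneg_of_le_pi ha0.le
    · linarith [Real.pi_pos]
    · linarith
  have hsin0 : 0 < Real.sin (π / q) := Real.sin_pos_of_pos_of_lt_pi hb0 (by
    have : π / q ≤ π / 3 := by
      apply div_le_div_of_nonneg_left hπ.le (by norm_num) hq'
    linarith)
  have hsq : Real.sin (π / q) ^ 2 < Real.cos (π / p) ^ 2 := by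
    apply pow_lt_pow_left₀ hkey hsin0.le
    norm_num
  have hmain : Real.cos (π / p) ^ 2 + Real.cos (π / q) ^ 2 > 1 := by
    have := Real.sin_sq_add_cos_sq (π / q)
    nlinarith
  have hsqrt : Real.sqrt (Real.cos (π / p) ^ 2 + Real.cos (π / q) ^ 2) > 1 := by
    rw [show (1:ℝ) = Real.sqrt 1 from (Real.sqrt_one).symm]
    exact Real.sqrt_lt_sqrt (by norm_num) hmain
  exact ⟨hmain, hsqrt, by linarith, by linarith, by norm_num⟩
end

section
/- For every natural number n > 2 and every nonzero real number x, the n-th cyclotomic polynomial satisfies eval x (cyclotomic n ℝ) = x^{φ(n)/2} · eval (x + x⁻¹) Ψ_n, where Ψ_n is the minimal polynomial over ℚ of 2·cos(2π/n), mapped into ℝ[X]. -/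
/-!
For a primitive `n`-th root of unity `ζ ∈ ℂ`, put `α = ζ + ζ⁻¹ = 2 Re ζ` and let `Ψ` be its
minimal polynomial over `ℚ`, of degree `m`. Then `ζ` is a root of the monic polynomial
`X ^ m * Ψ (X + X⁻¹)` of degree `2 m`, so `Φ_n` divides it. Conversely `ℚ(α)` is real while `ζ`
is not, so `ℚ(α)` is a proper subfield of `ℚ(ζ)` and `m` is a proper divisor of `φ(n)`, whence
`2 m ≤ φ(n)`. The two monic polynomials therefore coincide.
-/

open Real Polynomial

namespace Polynomial

section PalindromicLift

variable {R : Type*} [CommSemiring R]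

/-- `X ^ p.natDegree * p (X + X⁻¹)`, expanded as `∑ aₖ (X² + 1)ᵏ X^(deg p - k)`. -/
noncomputable def palindromicLift (p : R[X]) : R[X] :=
  ∑ k ∈ Finset.range (p.natDegree + 1), C (p.coeff k) * (X ^ 2 + 1) ^ k * X ^ (p.natDegree - k)

theorem aeval_palindromicLift {K : Type*} [Field K] [Algebra R K] (p : R[X]) {x : K}
    (hx : x ≠ 0) : aeval x (palindromicLift p) = x ^ p.natDegree * aeval (x + x⁻¹) p := by
  rw [palindromicLift, map_sum, aeval_eq_sum_range, Finset.mul_sum]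
  refine Finset.sum_congr rfl fun k hk => ?_
  obtain ⟨j, hj⟩ := Nat.exists_eq_add_of_le (Nat.lt_succ_iff.mp (Finset.mem_range.mp hk))
  have hsq : x ^ 2 + 1 = x * (x + x⁻¹) := by field_simp
  simp only [map_mul, map_pow, map_add, aeval_C, aeval_X, map_one, hj,
    Nat.add_sub_cancel_left, Algebra.smul_def]
  rw [hsq, mul_pow]
  ring

theorem natDegree_C_mul_X_sq_add_one_pow_mul_X_pow_le (a : R) {k m : ℕ} :
    (C a * (X ^ 2 + 1) ^ k * X ^ (m - k) : R[X]).natDegree ≤ 2 * k + (m - k) := by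
  compute_degree
  omega

theorem natDegree_palindromicLift_le (p : R[X]) :
    (palindromicLift p).natDegree ≤ 2 * p.natDegree := by
  refine natDegree_sum_le_of_forall_le _ _ fun k hk => ?_
  have := Finset.mem_range.mp hk
  exact (natDegree_C_mul_X_sq_add_one_pow_mul_X_pow_le _).trans (by omega)

theorem coeff_X_sq_add_one_pow_two_mul (m : ℕ) :
    ((X ^ 2 + 1 : R[X]) ^ m).coeff (2 * m) = 1 := by
  nontriviality R
  have hmonic : (X ^ 2 + 1 : R[X]).Monic := by simpa using monic_X_pow_add_C (1 : R) two_ne_zero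
  have hdeg : ((X ^ 2 + 1 : R[X]) ^ m).natDegree = 2 * m := by
    rw [hmonic.natDegree_pow, mul_comm, show (X ^ 2 + 1 : R[X]).natDegree = 2 by compute_degree!]
  rw [← hdeg]
  exact (hmonic.pow m).coeff_natDegree

theorem coeff_palindromicLift_two_mul_natDegree (p : R[X]) :
    (palindromicLift p).coeff (2 * p.natDegree) = p.leadingCoeff := by
  have hlower : ∀ k ∈ Finset.range p.natDegree,
      (C (p.coeff k) * (X ^ 2 + 1) ^ k * X ^ (p.natDegree - k)).coeff (2 * p.natDegree) = 0 :=
    fun k hk => coeff_eq_zero_of_natDegree_lt <|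
      (natDegree_C_mul_X_sq_add_one_pow_mul_X_pow_le _).trans_lt
        (by have := Finset.mem_range.mp hk; omega)
  rw [palindromicLift, finsetSum_coeff, Finset.sum_range_succ, Finset.sum_eq_zero hlower,
    zero_add, Nat.sub_self, pow_zero, mul_one, coeff_C_mul, coeff_X_sq_add_one_pow_two_mul,
    mul_one, leadingCoeff]

theorem Monic.palindromicLift {p : R[X]} (hp : p.Monic) : p.palindromicLift.Monic :=
  monic_of_natDegree_le_of_coeff_eq_one _ (natDegree_palindromicLift_le p)
    ((coeff_palindromicLift_two_mul_natDegree p).trans hp)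

theorem Monic.natDegree_palindromicLift [Nontrivial R] {p : R[X]} (hp : p.Monic) :
    p.palindromicLift.natDegree = 2 * p.natDegree :=
  natDegree_eq_of_le_of_coeff_ne_zero (natDegree_palindromicLift_le p)
    ((coeff_palindromicLift_two_mul_natDegree p).trans hp ▸ one_ne_zero)

end PalindromicLift

end Polynomial

namespace IsPrimitiveRoot

open Complex IntermediateField

variable {ζ : ℂ} {n : ℕ}

theorem notMem_range_ofReal (hζ : IsPrimitiveRoot ζ n) (hn : 2 < n) :
    ζ ∉ Set.range ((↑) : ℝ → ℂ) := by
  rintro ⟨r, rfl⟩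
  have hr : IsPrimitiveRoot r n := hζ.of_map_of_injective (f := ofRealHom) ofReal_injective
  have := hr.eq_orderOf ▸ LinearOrderedRing.orderOf_le_two (x := r)
  omega

theorem add_inv_eq_two_mul_re (hζ : IsPrimitiveRoot ζ n) (hn : n ≠ 0) :
    ζ + ζ⁻¹ = (2 * ζ.re : ℝ) := by
  rw [inv_eq_conj (hζ.norm'_eq_one hn), add_conj]

theorem isIntegral_rat (hζ : IsPrimitiveRoot ζ n) (hn : n ≠ 0) : IsIntegral ℚ ζ :=
  (hζ.isIntegral (Nat.pos_of_ne_zero hn)).tower_top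

theorem isIntegral_rat_add_inv (hζ : IsPrimitiveRoot ζ n) (hn : n ≠ 0) :
    IsIntegral ℚ (ζ + ζ⁻¹) :=
  (hζ.isIntegral_rat hn).add (hζ.isIntegral_rat hn).inv

theorem adjoin_add_inv_lt (hζ : IsPrimitiveRoot ζ n) (hn : 2 < n) : ℚ⟮ζ + ζ⁻¹⟯ < ℚ⟮ζ⟯ := by
  have hreal : ℚ⟮ζ + ζ⁻¹⟯ ≤ (ofRealAm.restrictScalars ℚ).fieldRange :=
    adjoin_simple_le_iff.mpr ⟨_, (hζ.add_inv_eq_two_mul_re (by omega)).symm⟩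
  refine lt_of_le_of_ne (adjoin_simple_le_iff.mpr ?_) fun h => ?_
  · exact add_mem (mem_adjoin_simple_self ℚ ζ) (inv_mem (mem_adjoin_simple_self ℚ ζ))
  · exact hζ.notMem_range_ofReal hn (hreal (h ▸ mem_adjoin_simple_self ℚ ζ))

theorem two_mul_natDegree_minpoly_add_inv_le (hζ : IsPrimitiveRoot ζ n) (hn : 2 < n) :
    2 * (minpoly ℚ (ζ + ζ⁻¹)).natDegree ≤ n.totient := by
  have hlt := hζ.adjoin_add_inv_lt hn
  have : FiniteDimensional ℚ ℚ⟮ζ⟯ := adjoin.finiteDimensional (hζ.isIntegral_rat (by omega))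
  have hφ : Module.finrank ℚ ℚ⟮ζ⟯ = n.totient := by
    rw [adjoin.finrank (hζ.isIntegral_rat (by omega)), ← cyclotomic_eq_minpoly_rat hζ (by omega),
      natDegree_cyclotomic]
  have hm : Module.finrank ℚ ℚ⟮ζ + ζ⁻¹⟯ = (minpoly ℚ (ζ + ζ⁻¹)).natDegree :=
    adjoin.finrank (hζ.isIntegral_rat_add_inv (by omega))
  have hne : Module.finrank ℚ ℚ⟮ζ + ζ⁻¹⟯ ≠ Module.finrank ℚ ℚ⟮ζ⟯ :=
    fun h => hlt.ne (eq_of_le_of_finrank_eq hlt.le h)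
  obtain ⟨t, ht⟩ := finrank_dvd_of_le_right hlt.le
  rw [hφ, hm] at ht hne
  have hφpos : 0 < n.totient := Nat.totient_pos.mpr (by omega)
  rcases t with _ | _ | t
  · omega
  · omega
  · rw [ht]; nlinarith

theorem cyclotomic_eq_palindromicLift_minpoly_add_inv (hζ : IsPrimitiveRoot ζ n) (hn : 2 < n) :
    cyclotomic n ℚ = (minpoly ℚ (ζ + ζ⁻¹)).palindromicLift := by
  have hΨ := minpoly.monic (hζ.isIntegral_rat_add_inv (by omega))
  have hdvd : cyclotomic n ℚ ∣ (minpoly ℚ (ζ + ζ⁻¹)).palindromicLift := by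
    rw [cyclotomic_eq_minpoly_rat hζ (by omega)]
    refine minpoly.dvd ℚ ζ ?_
    rw [aeval_palindromicLift _ (hζ.ne_zero (by omega)), minpoly.aeval, mul_zero]
  refine (eq_of_monic_of_dvd_of_natDegree_le (cyclotomic.monic n ℚ) hΨ.palindromicLift hdvd ?_).symm
  rw [hΨ.natDegree_palindromicLift, natDegree_cyclotomic]
  exact hζ.two_mul_natDegree_minpoly_add_inv_le hn

theorem two_mul_natDegree_minpoly_add_inv (hζ : IsPrimitiveRoot ζ n) (hn : 2 < n) :
    2 * (minpoly ℚ (ζ + ζ⁻¹)).natDegree = n.totient := by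
  rw [← (minpoly.monic (hζ.isIntegral_rat_add_inv (by omega))).natDegree_palindromicLift,
    ← hζ.cyclotomic_eq_palindromicLift_minpoly_add_inv hn, natDegree_cyclotomic]

end IsPrimitiveRoot

theorem cyclotomic_eval_eq_minpoly_cos_eval (n : ℕ) (hn : 2 < n)
    (x : ℝ) (hx : x ≠ 0) :
    Polynomial.eval x (cyclotomic n ℝ) =
      x ^ (Nat.totient n / 2) *
        Polynomial.eval (x + x⁻¹)
          ((minpoly ℚ (2 * Real.cos (2 * π / n))).map (algebraMap ℚ ℝ)) := by
  have hζ := Complex.isPrimitiveRoot_exp n (by omega)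
  have hα : Complex.exp (2 * π * Complex.I / n) + (Complex.exp (2 * π * Complex.I / n))⁻¹ =
      algebraMap ℝ ℂ (2 * Real.cos (2 * π / n)) := by
    rw [hζ.add_inv_eq_two_mul_re (by omega), Complex.coe_algebraMap,
      show 2 * π * Complex.I / n = ((2 * π / n : ℝ) : ℂ) * Complex.I by push_cast; ring,
      Complex.exp_ofReal_mul_I_re]
  have hcyc := hζ.cyclotomic_eq_palindromicLift_minpoly_add_inv hn
  have hdeg := hζ.two_mul_natDegree_minpoly_add_inv hn
  rw [hα, minpoly.algebraMap_eq (algebraMap ℝ ℂ).injective] at hcyc hdeg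
  rw [← map_cyclotomic n (algebraMap ℚ ℝ), eval_map_algebraMap, hcyc, aeval_palindromicLift _ hx,
    eval_map_algebraMap, ← hdeg, Nat.mul_div_cancel_left _ two_pos]
end

section
/- (Watkins–Zeitlin) The minimal polynomials Ψ_d of 2·cos(2π/d) satisfy, as identities in ℚ[X]: for every natural number s ≥ 1, ∏_{d ∣ 2s} Ψ_d = P_{s+1} − P_{s−1}, and for every natural number s ≥ 0, ∏_{d ∣ 2s+1} Ψ_d = P_{s+1} − P_s, where the products run over all positive divisors d of 2s (respectively 2s+1) and the polynomials P are mapped from ℤ[X] into ℚ[X]. -/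
open Real Polynomial

/-- Rescaled Chebyshev polynomials of the first kind:
`P 0 = 2`, `P 1 = X`, `P (n+2) = X * P (n+1) - P n`,
satisfying `P n (2 cos θ) = 2 cos (n θ)`. -/
noncomputable def P : ℕ → Polynomial ℤ
  | 0 => 2
  | 1 => X
  | (n + 2) => X * P (n + 1) - P n

/-!
Write `ξ_d = 2 cos (2π/d)` and `Ψ_d` for its minimal polynomial. If `ζ` is a primitive `d`-th root
of unity then `ξ_d = ζ + ζ⁻¹`, and `f(y + y⁻¹)` is a Laurent polynomial in `y`; since all primitive
`d`-th roots share the minimal polynomial `Φ_d`, the roots of `Ψ_d` include every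
`2 cos (2πk/d)` with `k` coprime to `d`. Hence `∏_{d ∣ n} Ψ_d` vanishes at all `2 cos (2πk/n)`,
of which those with `0 ≤ k ≤ n/2` are distinct, so its degree exceeds `n/2`. On the other hand
`F = P_a - P_b` with `a + b = n`, `a - b ∈ {1, 2}` is monic of degree `n/2 + 1` and vanishes at
every `ξ_d` with `d ∣ n` because `cos (aθ) = cos (bθ)` when `(a + b)θ ∈ 2πℤ`. The `Ψ_d` are pairwise
distinct (`Ψ_d ∣ P_d - 2` forces `d' ∣ d` if `Ψ_d = Ψ_{d'}`), so their product divides `F`, and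
comparing degrees gives equality.
-/

theorem P_eq_chebyshev_C : ∀ n : ℕ, P n = Chebyshev.C ℤ n
  | 0 => by simp [P]
  | 1 => by simp [P]
  | n + 2 => by
    rw [P, P_eq_chebyshev_C (n + 1), P_eq_chebyshev_C n]
    push_cast
    rw [Chebyshev.C_add_two]

theorem aeval_two_mul_cos_P (θ : ℝ) (n : ℕ) : aeval (2 * cos θ) (P n) = 2 * cos (n * θ) := by
  rw [P_eq_chebyshev_C, aeval_def, eval₂_eq_eval_map, Chebyshev.map_C,
    Chebyshev.C_two_mul_real_cos]
  norm_cast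

theorem aeval_two_mul_cos_map_P_sub_P (θ : ℝ) (a b : ℕ) :
    aeval (2 * cos θ) ((P a - P b).map (Int.castRingHom ℚ)) =
      2 * cos (a * θ) - 2 * cos (b * θ) := by
  rw [show Int.castRingHom ℚ = algebraMap ℤ ℚ from rfl, aeval_map_algebraMap, map_sub,
    aeval_two_mul_cos_P, aeval_two_mul_cos_P]

theorem natDegree_P : ∀ n : ℕ, (P n).natDegree = n
  | 0 => by simp [P]
  | 1 => by simp [P]
  | n + 2 => by
    have h := natDegree_P (n + 1)
    have hX : (X * P (n + 1)).natDegree = n + 2 := by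
      rw [natDegree_X_mul fun h0 => by simp [h0] at h, h]
    rw [P, natDegree_sub_eq_left_of_natDegree_lt, hX]
    rw [hX, natDegree_P n]
    omega

theorem P_monic : ∀ n : ℕ, 1 ≤ n → (P n).Monic
  | 1, _ => by simp [P]
  | n + 2, _ => by
    have h := P_monic (n + 1) (by omega)
    rw [P]
    refine (monic_X.mul h).sub_of_left (degree_lt_degree ?_)
    rw [natDegree_X_mul h.ne_zero, natDegree_P, natDegree_P]
    omega

theorem P_sub_P_monic {a b : ℕ} (h : b < a) : (P a - P b).Monic :=
  (P_monic a (by omega)).sub_of_left (degree_lt_degree (by rwa [natDegree_P, natDegree_P]))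

theorem natDegree_P_sub_P {a b : ℕ} (h : b < a) : (P a - P b).natDegree = a := by
  rw [natDegree_sub_eq_left_of_natDegree_lt, natDegree_P]
  rwa [natDegree_P, natDegree_P]

theorem exists_aeval_eq_pow_mul_aeval_add_inv {K L : Type*} [CommRing K] [Field L] [Algebra K L]
    (f : K[X]) :
    ∃ g : K[X], ∀ y : L, y ≠ 0 → aeval y g = y ^ f.natDegree * aeval (y + y⁻¹) f := by
  set m := f.natDegree
  refine ⟨∑ i ∈ Finset.range (m + 1), C (f.coeff i) * (X ^ 2 + 1) ^ i * X ^ (m - i),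
    fun y hy => ?_⟩
  rw [map_sum, aeval_eq_sum_range, Finset.mul_sum]
  refine Finset.sum_congr rfl fun i hi => ?_
  have him : y ^ m = y ^ i * y ^ (m - i) := by
    rw [← pow_add, Nat.add_sub_cancel' (Finset.mem_range_succ_iff.mp hi)]
  have hsq : y ^ 2 + 1 = (y + y⁻¹) * y := by field_simp
  simp only [map_mul, map_pow, map_add, map_one, aeval_X, aeval_C, Algebra.smul_def, him, hsq,
    mul_pow]
  ring

theorem aeval_pow_add_inv_eq_zero {L : Type*} [Field L] [CharZero L] {f : ℚ[X]} {ζ : L} {d k : ℕ}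
    (hζ : IsPrimitiveRoot ζ d) (hd : 0 < d) (hk : k.Coprime d) (hf : aeval (ζ + ζ⁻¹) f = 0) :
    aeval (ζ ^ k + (ζ ^ k)⁻¹) f = 0 := by
  obtain ⟨g, hg⟩ := exists_aeval_eq_pow_mul_aeval_add_inv (L := L) f
  have hζ0 : ζ ≠ 0 := hζ.ne_zero hd.ne'
  have hgζ : aeval ζ g = 0 := by rw [hg ζ hζ0, hf, mul_zero]
  have hmin : minpoly ℚ (ζ ^ k) = minpoly ℚ ζ := by
    rw [← cyclotomic_eq_minpoly_rat hζ hd, ← cyclotomic_eq_minpoly_rat (hζ.pow_of_coprime k hk) hd]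
  have hgζk : aeval (ζ ^ k) g = 0 := minpoly.dvd_iff.mp (hmin ▸ minpoly.dvd_iff.mpr hgζ)
  rw [hg _ (pow_ne_zero k hζ0)] at hgζk
  exact (mul_eq_zero.mp hgζk).resolve_left (pow_ne_zero _ (pow_ne_zero k hζ0))

theorem ofReal_two_mul_cos (t : ℝ) :
    ((2 * cos t : ℝ) : ℂ) = Complex.exp (t * Complex.I) + (Complex.exp (t * Complex.I))⁻¹ := by
  rw [← Complex.exp_neg, ← neg_mul, ← Complex.two_cos]
  push_cast
  rfl

theorem aeval_two_mul_cos_eq_zero_of_coprime {f : ℚ[X]} {d k : ℕ} (hd : 0 < d)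
    (hk : k.Coprime d) (hf : aeval (2 * cos (2 * π / d)) f = 0) :
    aeval (2 * cos (2 * π * k / d)) f = 0 := by
  set ζ := Complex.exp (2 * π * Complex.I / d)
  have hζ : ∀ j : ℕ, ((2 * cos (2 * π * j / d) : ℝ) : ℂ) = ζ ^ j + (ζ ^ j)⁻¹ := by
    intro j
    rw [ofReal_two_mul_cos, ← Complex.exp_nat_mul]
    have harg : ((2 * π * j / d : ℝ) : ℂ) * Complex.I = j * (2 * π * Complex.I / d) := by
      push_cast
      ring
    rw [harg]
  have hζ1 : ((2 * cos (2 * π / d) : ℝ) : ℂ) = ζ + ζ⁻¹ := by simpa using hζ 1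
  have hcoe : ∀ x : ℝ, ((aeval x f : ℝ) : ℂ) = aeval (x : ℂ) f := fun x =>
    (aeval_algebraMap_apply ℂ x f).symm
  apply Complex.ofReal_injective
  rw [hcoe, hζ k, Complex.ofReal_zero]
  refine aeval_pow_add_inv_eq_zero (Complex.isPrimitiveRoot_exp d hd.ne') hd hk ?_
  rw [← hζ1, ← hcoe, hf, Complex.ofReal_zero]

theorem aeval_two_mul_cos_map_P_sub_P_zero {d : ℕ} (hd : 0 < d) :
    aeval (2 * cos (2 * π / d)) ((P d - P 0).map (Int.castRingHom ℚ)) = 0 := by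
  rw [aeval_two_mul_cos_map_P_sub_P, mul_div_cancel₀ _ (by positivity : (d : ℝ) ≠ 0)]
  simp

theorem isIntegral_two_mul_cos_two_pi_div {d : ℕ} (hd : 0 < d) :
    IsIntegral ℚ (2 * cos (2 * π / d)) :=
  ⟨_, (P_sub_P_monic hd).map _, by rw [← aeval_def, aeval_two_mul_cos_map_P_sub_P_zero hd]⟩

theorem dvd_of_cos_mul_two_pi_div_eq_one {a b : ℕ} (hb : 0 < b)
    (h : cos (a * (2 * π / b)) = 1) : b ∣ a := by
  obtain ⟨m, hm⟩ := (Real.cos_eq_one_iff _).mp h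
  have hmb : (m * b : ℝ) = a := by
    field_simp at hm
    nlinarith [Real.pi_pos]
  exact Int.natCast_dvd_natCast.mp (Dvd.intro_left m (by exact_mod_cast hmb))

theorem dvd_of_minpoly_two_mul_cos_eq {a b : ℕ} (ha : 0 < a) (hb : 0 < b)
    (h : minpoly ℚ (2 * cos (2 * π / a)) = minpoly ℚ (2 * cos (2 * π / b))) : b ∣ a := by
  have hdvd : minpoly ℚ (2 * cos (2 * π / b)) ∣ (P a - P 0).map (Int.castRingHom ℚ) :=
    h ▸ minpoly.dvd_iff.mpr (aeval_two_mul_cos_map_P_sub_P_zero ha)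
  rw [minpoly.dvd_iff, aeval_two_mul_cos_map_P_sub_P, Nat.cast_zero, zero_mul, cos_zero,
    mul_one, sub_eq_zero] at hdvd
  exact dvd_of_cos_mul_two_pi_div_eq_one hb (by linarith)

theorem prod_minpoly_two_mul_cos_dvd {n : ℕ} {F : ℚ[X]}
    (hF : ∀ d ∈ n.divisors, aeval (2 * cos (2 * π / d)) F = 0) :
    ∏ d ∈ n.divisors, minpoly ℚ (2 * cos (2 * π / d)) ∣ F := by
  refine Finset.prod_dvd_of_coprime (fun a ha b hb hab => ?_) fun d hd => minpoly.dvd _ _ (hF d hd)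
  have ha0 := Nat.pos_of_mem_divisors ha
  have hb0 := Nat.pos_of_mem_divisors hb
  have hirr := minpoly.irreducible (isIntegral_two_mul_cos_two_pi_div ha0)
  refine hirr.coprime_iff_not_dvd.mpr fun hdvd => hab ?_
  have hba : minpoly ℚ (2 * cos (2 * π / b)) = minpoly ℚ (2 * cos (2 * π / a)) :=
    minpoly.eq_of_irreducible_of_monic
      (minpoly.irreducible (isIntegral_two_mul_cos_two_pi_div hb0))
      (minpoly.dvd_iff.mp hdvd) (minpoly.monic (isIntegral_two_mul_cos_two_pi_div hb0))
  exact Nat.dvd_antisymm (dvd_of_minpoly_two_mul_cos_eq hb0 ha0 hba)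
    (dvd_of_minpoly_two_mul_cos_eq ha0 hb0 hba.symm)

theorem aeval_prod_minpoly_two_mul_cos {n : ℕ} (hn : 0 < n) (k : ℕ) :
    aeval (2 * cos (2 * π * k / n)) (∏ d ∈ n.divisors, minpoly ℚ (2 * cos (2 * π / d))) = 0 := by
  set g := k.gcd n
  have hg : 0 < g := Nat.gcd_pos_of_pos_right k hn
  have hmem : n / g ∈ n.divisors :=
    Nat.mem_divisors.mpr ⟨Nat.div_dvd_of_dvd (Nat.gcd_dvd_right k n), hn.ne'⟩
  have harg : 2 * π * k / n = 2 * π * (k / g : ℕ) / (n / g : ℕ) := by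
    rw [Nat.cast_div (Nat.gcd_dvd_left k n) (by positivity),
      Nat.cast_div (Nat.gcd_dvd_right k n) (by positivity)]
    field_simp
  rw [map_prod, harg]
  refine Finset.prod_eq_zero hmem (aeval_two_mul_cos_eq_zero_of_coprime
    (Nat.pos_of_mem_divisors hmem) (Nat.coprime_div_gcd_div_gcd hg) (minpoly.aeval _ _))

theorem injOn_two_mul_cos_two_pi_mul_div {n : ℕ} (hn : 0 < n) :
    Set.InjOn (fun k : ℕ => 2 * cos (2 * π * k / n)) (Finset.range (n / 2 + 1)) := by
  have hmem : ∀ k ∈ (Finset.range (n / 2 + 1) : Set ℕ), 2 * π * k / n ∈ Set.Icc 0 π := by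
    intro k hk
    have hk : 2 * (k : ℝ) ≤ n := by
      simp only [Finset.coe_range, Set.mem_Iio] at hk
      exact_mod_cast (by omega : 2 * k ≤ n)
    refine ⟨by positivity, div_le_of_le_mul₀ (Nat.cast_nonneg _) pi_pos.le (by nlinarith [pi_pos])⟩
  intro a ha b hb hab
  have := injOn_cos (hmem a ha) (hmem b hb) (by simpa using hab)
  field_simp at this
  exact_mod_cast this

theorem div_two_lt_natDegree_of_aeval_two_mul_cos {n : ℕ} (hn : 0 < n) {Q : ℚ[X]} (hQ : Q ≠ 0)
    (h : ∀ k : ℕ, aeval (2 * cos (2 * π * k / n)) Q = 0) : n / 2 < Q.natDegree := by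
  classical
  have hroots : ((Finset.range (n / 2 + 1)).image fun k : ℕ => 2 * cos (2 * π * k / n)).val ⊆
      (Q.map (algebraMap ℚ ℝ)).roots := by
    intro x hx
    obtain ⟨k, -, rfl⟩ := Finset.mem_image.mp (Finset.mem_val.mp hx)
    rw [mem_roots (map_ne_zero hQ), IsRoot, eval_map_algebraMap, h]
  have hcard := card_le_degree_of_subset_roots hroots
  rw [Finset.card_image_of_injOn (injOn_two_mul_cos_two_pi_mul_div hn), Finset.card_range,
    natDegree_map] at hcard
  omega

theorem prod_minpoly_two_mul_cos_eq {n : ℕ} (hn : 0 < n) {F : ℚ[X]} (hFm : F.Monic)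
    (hFd : F.natDegree ≤ n / 2 + 1) (hF : ∀ k : ℕ, aeval (2 * cos (2 * π * k / n)) F = 0) :
    ∏ d ∈ n.divisors, minpoly ℚ (2 * cos (2 * π / d)) = F := by
  have hmon : (∏ d ∈ n.divisors, minpoly ℚ (2 * cos (2 * π / d))).Monic :=
    monic_prod_of_monic _ _ fun d hd =>
      minpoly.monic (isIntegral_two_mul_cos_two_pi_div (Nat.pos_of_mem_divisors hd))
  have hdvd : ∏ d ∈ n.divisors, minpoly ℚ (2 * cos (2 * π / d)) ∣ F :=
    prod_minpoly_two_mul_cos_dvd fun d hd => by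
      have hd0 : (d : ℝ) ≠ 0 := by exact_mod_cast (Nat.pos_of_mem_divisors hd).ne'
      have := hF (n / d)
      rwa [Nat.cast_div (Nat.dvd_of_mem_divisors hd) hd0, mul_div_assoc,
        div_div_cancel_left' (by positivity), ← div_eq_mul_inv] at this
  have hdeg := div_two_lt_natDegree_of_aeval_two_mul_cos hn hmon.ne_zero
    (aeval_prod_minpoly_two_mul_cos hn)
  exact eq_of_dvd_of_natDegree_le_of_leadingCoeff hdvd (by omega)
    (by rw [hmon.leadingCoeff, hFm.leadingCoeff])

theorem aeval_two_mul_cos_map_P_sub_P_eq_zero (a b k : ℕ) :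
    aeval (2 * cos (2 * π * k / (a + b : ℕ))) ((P a - P b).map (Int.castRingHom ℚ)) = 0 := by
  rcases (a + b).eq_zero_or_pos with hab | hab
  · obtain ⟨rfl, rfl⟩ : a = 0 ∧ b = 0 := by omega
    simp
  set θ := 2 * π * k / (a + b : ℕ)
  have hθ : a * θ = k * (2 * π) - b * θ := by
    simp only [θ]
    field_simp
    push_cast
    ring
  rw [aeval_two_mul_cos_map_P_sub_P, hθ, cos_nat_mul_two_pi_sub, sub_self]

theorem prod_minpoly_two_mul_cos_eq_map_P_sub_P {a b : ℕ} (hba : b < a) (hab : a ≤ b + 2) :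
    ∏ d ∈ (a + b).divisors, minpoly ℚ (2 * cos (2 * π / d)) =
      (P a - P b).map (Int.castRingHom ℚ) :=
  prod_minpoly_two_mul_cos_eq (by omega) ((P_sub_P_monic hba).map _)
    (by rw [(P_sub_P_monic hba).natDegree_map, natDegree_P_sub_P hba]; omega)
    (aeval_two_mul_cos_map_P_sub_P_eq_zero a b)

theorem watkins_zeitlin :
    (∀ s : ℕ, 1 ≤ s →
      ∏ d ∈ Nat.divisors (2 * s), minpoly ℚ (2 * Real.cos (2 * π / d)) =
        (P (s + 1) - P (s - 1)).map (Int.castRingHom ℚ)) ∧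
    (∀ s : ℕ,
      ∏ d ∈ Nat.divisors (2 * s + 1), minpoly ℚ (2 * Real.cos (2 * π / d)) =
        (P (s + 1) - P s).map (Int.castRingHom ℚ)) := by
  refine ⟨fun s hs => ?_, fun s => ?_⟩
  · rw [show 2 * s = s + 1 + (s - 1) by omega]
    exact prod_minpoly_two_mul_cos_eq_map_P_sub_P (by omega) (by omega)
  · rw [show 2 * s + 1 = s + 1 + s by omega]
    exact prod_minpoly_two_mul_cos_eq_map_P_sub_P (by omega) (by omega)
end

section
/- The minimal polynomial over ℚ of the real number 2·cos(π/20) = 2·cos(2π/40) equals X^8 − 8·X^6 + 19·X^4 − 12·X^2 + 1. (This is the minimal polynomial Ψ_{2pq} relevant to the {p,q} = {5,4} hyperbolic tessellation, of degree φ(40)/2 = 8.) -/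
open Real Polynomial IntermediateField

/-! If `ζ` is a primitive `40`-th root of unity then `2 cos (π / 20) = ζ + ζ⁻¹`, and `ζ` is a root of
`X ^ 2 - (ζ + ζ⁻¹) X + 1` over `ℚ(ζ + ζ⁻¹)`. Hence `φ 40 = 16 = [ℚ(ζ) : ℚ]` is at most twice the
degree of `2 cos (π / 20)`, which is therefore at least `8`; the monic octic vanishes at it, so it is
the minimal polynomial. -/

theorem natDegree_minpoly_le_two_mul_natDegree_minpoly_add_inv {K L : Type*} [Field K] [Field L]
    [Algebra K L] {ζ : L} (hζ : ζ ≠ 0) :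
    (minpoly K ζ).natDegree ≤ 2 * (minpoly K (ζ + ζ⁻¹)).natDegree := by
  set y := ζ + ζ⁻¹
  by_cases hy : IsIntegral K y
  swap
  · have hζ' : ¬IsIntegral K ζ := fun h ↦ hy (h.add h.inv)
    simp [minpoly.eq_zero hζ']
  have hquad : aeval ζ (X ^ 2 - C (AdjoinSimple.gen K y) * X + 1) = 0 := by
    simp only [map_add, map_sub, map_mul, map_pow, aeval_X, map_one, aeval_C,
      AdjoinSimple.algebraMap_gen, y]
    field_simp
    ring
  have hmonic : (X ^ 2 - C (AdjoinSimple.gen K y) * X + 1).Monic := by monicity!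
  have hζint : IsIntegral K⟮y⟯ ζ := ⟨_, hmonic, by rwa [← aeval_def]⟩
  have : FiniteDimensional K K⟮y⟯ := adjoin.finiteDimensional hy
  have : FiniteDimensional K⟮y⟯ K⟮y⟯⟮ζ⟯ := adjoin.finiteDimensional hζint
  have : FiniteDimensional K (K⟮y⟯⟮ζ⟯.restrictScalars K) :=
    Module.Finite.trans (R := K) K⟮y⟯ K⟮y⟯⟮ζ⟯
  have hdeg : (X ^ 2 - C (AdjoinSimple.gen K y) * X + 1).natDegree = 2 := by compute_degree!
  have hrel : Module.finrank K⟮y⟯ K⟮y⟯⟮ζ⟯ ≤ 2 := by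
    rw [adjoin.finrank hζint, ← hdeg]
    exact natDegree_le_of_dvd (minpoly.dvd _ ζ hquad) hmonic.ne_zero
  calc (minpoly K ζ).natDegree
      = (minpoly K (⟨ζ, mem_adjoin_simple_self _ ζ⟩ : K⟮y⟯⟮ζ⟯.restrictScalars K)).natDegree := by
        rw [minpoly_eq]
    _ ≤ Module.finrank K (K⟮y⟯⟮ζ⟯.restrictScalars K) := minpoly.natDegree_le _
    _ = Module.finrank K K⟮y⟯⟮ζ⟯ := rfl
    _ = Module.finrank K K⟮y⟯ * Module.finrank K⟮y⟯ K⟮y⟯⟮ζ⟯ :=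
        have : Module.Free K⟮y⟯ K⟮y⟯⟮ζ⟯ := .of_divisionRing _ _
        (Module.finrank_mul_finrank K K⟮y⟯ K⟮y⟯⟮ζ⟯).symm
    _ ≤ _ := by rw [adjoin.finrank hy, mul_comm]; gcongr

theorem IsPrimitiveRoot.totient_le_two_mul_natDegree_minpoly_add_inv {L : Type*} [Field L]
    [CharZero L] {ζ : L} {n : ℕ} (h : IsPrimitiveRoot ζ n) (hn : 0 < n) :
    n.totient ≤ 2 * (minpoly ℚ (ζ + ζ⁻¹)).natDegree := by
  rw [← natDegree_cyclotomic n ℚ, cyclotomic_eq_minpoly_rat h hn]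
  exact natDegree_minpoly_le_two_mul_natDegree_minpoly_add_inv (h.ne_zero hn.ne')

theorem totient_le_two_mul_natDegree_minpoly_two_cos {n : ℕ} (hn : 0 < n) :
    n.totient ≤ 2 * (minpoly ℚ (2 * cos (2 * π / n))).natDegree := by
  set ζ := Complex.exp (2 * π * Complex.I / n)
  have hcos : ((2 * cos (2 * π / n) : ℝ) : ℂ) = ζ + ζ⁻¹ := by
    simp only [ζ, ← Complex.exp_neg]
    push_cast
    rw [Complex.two_cos]
    ring_nf
  rw [← minpoly.algebraMap_eq (algebraMap ℝ ℂ).injective, Complex.coe_algebraMap, hcos]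
  exact (Complex.isPrimitiveRoot_exp n hn.ne').totient_le_two_mul_natDegree_minpoly_add_inv hn

/-- With `t = 2 cos (π / 20)`, doubling the angle twice gives `2 cos (π / 5) = (t ^ 2 - 2) ^ 2 - 2`,
the golden ratio, a root of `X ^ 2 - X - 1`; expanding gives the octic. -/
theorem aeval_two_cos_pi_div_twenty :
    aeval (2 * cos (π / 20)) (X ^ 8 - 8 * X ^ 6 + 19 * X ^ 4 - 12 * X ^ 2 + 1 : ℚ[X]) = 0 := by
  have two_cos_double (θ : ℝ) : 2 * cos (2 * θ) = (2 * cos θ) ^ 2 - 2 := by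
    rw [cos_two_mul]; ring
  have golden : (2 * cos (π / 5)) ^ 2 - 2 * cos (π / 5) - 1 = 0 := by
    linear_combination quadratic_root_cos_pi_div_five
  rw [show π / 5 = 2 * (2 * (π / 20)) by ring, two_cos_double, two_cos_double] at golden
  simp only [map_add, map_sub, map_mul, map_pow, aeval_X, map_one, map_ofNat]
  linear_combination golden

theorem minpoly_two_cos_pi_div_twenty :
    minpoly ℚ (2 * Real.cos (π / 20)) =
      X ^ 8 - 8 * X ^ 6 + 19 * X ^ 4 - 12 * X ^ 2 + 1 := by
  set p : ℚ[X] := X ^ 8 - 8 * X ^ 6 + 19 * X ^ 4 - 12 * X ^ 2 + 1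
  have hmonic : p.Monic := by simp only [p]; monicity!
  have hdeg : p.natDegree = 8 := by simp only [p]; compute_degree!
  have hint : IsIntegral ℚ (2 * cos (π / 20)) := ⟨p, hmonic, aeval_two_cos_pi_div_twenty⟩
  have hdeg_min : 8 ≤ (minpoly ℚ (2 * cos (π / 20))).natDegree := by
    have h := totient_le_two_mul_natDegree_minpoly_two_cos (n := 40) (by norm_num)
    rw [show 2 * π / (40 : ℕ) = π / 20 by push_cast; ring,
      show Nat.totient 40 = 16 by decide] at h
    omega
  refine (minpoly.unique_of_degree_le_degree_minpoly _ _ hmonic aeval_two_cos_pi_div_twenty ?_).symm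
  rw [degree_eq_natDegree hmonic.ne_zero, degree_eq_natDegree (minpoly.ne_zero hint)]
  exact_mod_cast hdeg.trans_le hdeg_min
end

section
/- For all natural numbers n ≥ 1 and k ≥ 1 with gcd(k, n) = 1, the real numbers 2·cos(2πk/n) and 2·cos(2π/n) have the same minimal polynomial over ℚ: minpoly ℚ (2·cos(2πk/n)) = minpoly ℚ (2·cos(2π/n)). In other words, the numbers ζ_n^k + ζ_n^{−k} for k coprime to n are exactly the roots of Ψ_n. -/
/-!
For `k` coprime to `n`, both `ζ_n^k` and `ζ_n` are primitive `n`-th roots of unity in `ℂ`, so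
they are the images of one generator of the `n`-th cyclotomic field under two `ℚ`-embeddings;
embeddings preserve minimal polynomials, and `2 cos(2πk/n) = ζ_n^k + ζ_n^{-k}`.
-/

open Real

theorem IsPrimitiveRoot.exists_algHom_eq {n : ℕ} [NeZero n] {K L : Type*} [Field K]
    [Algebra ℚ K] [IsCyclotomicExtension {n} ℚ K] [Field L] [CharZero L] {ζ : K}
    (hζ : IsPrimitiveRoot ζ n) {w : L} (hw : IsPrimitiveRoot w n) :
    ∃ φ : K →ₐ[ℚ] L, φ ζ = w := by
  let e :=
    hζ.embeddingsEquivPrimitiveRoots L (Polynomial.cyclotomic.irreducible_rat (NeZero.pos n))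
  exact ⟨e.symm ⟨w, (mem_primitiveRoots (NeZero.pos n)).2 hw⟩,
    congrArg Subtype.val (e.apply_symm_apply _)⟩

theorem IsPrimitiveRoot.minpoly_add_inv_eq {L : Type*} [Field L] [CharZero L]
    {n : ℕ} [NeZero n] {w w' : L} (hw : IsPrimitiveRoot w n) (hw' : IsPrimitiveRoot w' n) :
    minpoly ℚ (w + w⁻¹) = minpoly ℚ (w' + w'⁻¹) := by
  let K := CyclotomicField n ℚ
  -- Not found by instance search: Mathlib states it for `CyclotomicField.algebra`, whereas the
  -- `ℚ`-algebra structure found here is `DivisionRing.toRatAlgebra`.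
  have : IsCyclotomicExtension {n} ℚ K := CyclotomicField.isCyclotomicExtension n ℚ
  set ζ := IsCyclotomicExtension.zeta n ℚ K
  have hζ : IsPrimitiveRoot ζ n := IsCyclotomicExtension.zeta_spec n ℚ K
  have h_eq_zeta {v : L} (hv : IsPrimitiveRoot v n) :
      minpoly ℚ (v + v⁻¹) = minpoly ℚ (ζ + ζ⁻¹) := by
    obtain ⟨φ, rfl⟩ := hζ.exists_algHom_eq hv
    rw [← map_inv₀, ← map_add, minpoly.algHom_eq φ φ.injective]
  rw [h_eq_zeta hw, h_eq_zeta hw']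

theorem minpoly_two_cos_eq_minpoly_exp_add_inv (θ : ℝ) :
    minpoly ℚ (2 * Real.cos θ) =
      minpoly ℚ (Complex.exp (θ * Complex.I) + (Complex.exp (θ * Complex.I))⁻¹) := by
  rw [← minpoly.algebraMap_eq (algebraMap ℝ ℂ).injective, Complex.coe_algebraMap,
    ← Complex.exp_neg, ← neg_mul]
  push_cast
  rw [Complex.two_cos]

theorem minpoly_two_cos_coprime_general (n k : ℕ) (hn : 1 ≤ n)
    (hcop : Nat.gcd k n = 1) :
    minpoly ℚ (2 * Real.cos (2 * π * k / n)) = minpoly ℚ (2 * Real.cos (2 * π / n)) := by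
  have : NeZero n := NeZero.of_pos hn
  have hn0 : n ≠ 0 := NeZero.ne n
  rw [minpoly_two_cos_eq_minpoly_exp_add_inv, minpoly_two_cos_eq_minpoly_exp_add_inv]
  apply IsPrimitiveRoot.minpoly_add_inv_eq (n := n)
  · convert Complex.isPrimitiveRoot_exp_of_coprime k n hn0 hcop using 2
    push_cast
    ring
  · convert Complex.isPrimitiveRoot_exp n hn0 using 2
    push_cast
    ring

theorem minpoly_two_cos_coprime (n k : ℕ) (hn : 1 ≤ n) (hk : 1 ≤ k)
    (hcop : Nat.gcd k n = 1) :
    minpoly ℚ (2 * Real.cos (2 * π * k / n)) = minpoly ℚ (2 * Real.cos (2 * π / n)) :=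
  minpoly_two_cos_coprime_general n k hn hcop
end
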